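/- Let Δ denote the dyadic intervals of [0,1), let J ∈ Δ, 0 < ε < 1, and let G ⊂ closure(J) be a finite union of closed dyadic intervals with 0 < |G| < (1−ε)|J|. Let ℐ be the family of maximal dyadic subintervals I of J with |I ∩ G| ≥ (1−ε)|I|, let ℐ* be the maximal elements among the dyadic parents {I¹ : I ∈ ℐ}, and set G* = ⋃_{I∈ℐ*} closure(I). Then G ⊂ G* ⊂ closure(J) and |G*| ≥ (1+ε)|G|. -/

import Mathlib

open MeasureTheory Set
open scoped ENNReal

noncomputable section

/-- `S` is a (half-open) dyadic interval of `[0,1)`. -/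
def IsDyadic (S : Set ℝ) : Prop :=
  ∃ n k : ℕ, k < 2 ^ n ∧ S = Set.Ico ((k : ℝ) / 2 ^ n) ((k + 1 : ℝ) / 2 ^ n)

/-- `P` is the dyadic parent of the dyadic interval `I` : a dyadic interval containing `I`
of twice its length. -/
def DParent (P I : Set ℝ) : Prop :=
  IsDyadic P ∧ IsDyadic I ∧ I ⊆ P ∧ volume P = 2 * volume I

/-- The family `ℐ` of maximal dyadic subintervals `I ⊆ J` with `|I ∩ G| ≥ (1-ε)|I|`. -/
def maxFam (ε : ℝ) (J G : Set ℝ) : Set (Set ℝ) :=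
  {I | IsDyadic I ∧ I ⊆ J ∧ ENNReal.ofReal (1 - ε) * volume I ≤ volume (I ∩ G) ∧
    ∀ I', IsDyadic I' → I' ⊆ J →
      ENNReal.ofReal (1 - ε) * volume I' ≤ volume (I' ∩ G) → I ⊆ I' → I' = I}

/-- The family `{I¹ : I ∈ ℐ}` of dyadic parents of elements of `ℐ`. -/
def parFam (ε : ℝ) (J G : Set ℝ) : Set (Set ℝ) :=
  {P | ∃ I ∈ maxFam ε J G, DParent P I}

/-- The family `ℐ*` of maximal elements of `{I¹ : I ∈ ℐ}`. -/
def starFam (ε : ℝ) (J G : Set ℝ) : Set (Set ℝ) :=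
  {P ∈ parFam ε J G | ∀ P' ∈ parFam ε J G, P ⊆ P' → P' = P}

/-- `G* = ⋃_{I ∈ ℐ*} closure I`. -/
def Gstar (ε : ℝ) (J G : Set ℝ) : Set ℝ :=
  ⋃ P ∈ starFam ε J G, closure P

/-! Call a dyadic `I ⊆ J` heavy if `|I ∩ G| ≥ (1-ε)|I|`, so that `ℐ` consists of the maximal
heavy intervals. Every point of `G` lies in a closed dyadic interval `I₀ ⊆ G`, which is heavy,
hence lies in some `I ∈ ℐ`. Since `|G| < (1-ε)|J|`, `J` is not heavy, so `I ≠ J` and its parent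
`I¹ ⊆ J` lies under a maximal parent `P ∈ ℐ*`; this gives `G ⊆ G*`. Conversely each `P ∈ ℐ*`
is the parent of a maximal heavy interval, so `P` itself is not heavy: `|P ∩ G| < (1-ε)|P|`.
The elements of `ℐ*` are pairwise disjoint dyadic intervals, so summing over them gives
`|G| ≤ (1-ε)|G*|`, and `(1+ε)(1-ε) ≤ 1`. -/

def dyadicIco (n k : ℕ) : Set ℝ := Ico ((k : ℝ) / 2 ^ n) ((k + 1 : ℝ) / 2 ^ n)

lemma isDyadic_iff {S : Set ℝ} : IsDyadic S ↔ ∃ n k : ℕ, k < 2 ^ n ∧ S = dyadicIco n k := Iff.rfl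

lemma mem_dyadicIco_iff {x : ℝ} {n k : ℕ} : x ∈ dyadicIco n k ↔ 0 ≤ x ∧ ⌊x * 2 ^ n⌋₊ = k := by
  have h2 : (0 : ℝ) < 2 ^ n := by positivity
  rw [dyadicIco, mem_Ico, div_le_iff₀ h2, lt_div_iff₀ h2]
  constructor
  · rintro ⟨hk, hk'⟩
    have hx : 0 ≤ x * 2 ^ n := (Nat.cast_nonneg k).trans hk
    exact ⟨nonneg_of_mul_nonneg_left hx h2, (Nat.floor_eq_iff hx).2 ⟨hk, hk'⟩⟩
  · rintro ⟨hx, rfl⟩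
    exact (Nat.floor_eq_iff (by positivity)).1 rfl

lemma dyadicIco_subset_ancestor {n m : ℕ} (k : ℕ) (h : m ≤ n) :
    dyadicIco n k ⊆ dyadicIco m (k / 2 ^ (n - m)) := by
  intro x hx
  rw [mem_dyadicIco_iff] at hx ⊢
  obtain ⟨hx0, rfl⟩ := hx
  refine ⟨hx0, ?_⟩
  obtain ⟨d, rfl⟩ := Nat.exists_eq_add_of_le h
  rw [Nat.add_sub_cancel_left, ← Nat.floor_div_natCast]
  congr 1
  push_cast
  rw [pow_add]
  field_simp

lemma dyadicIco_eq_of_mem {x : ℝ} {n k l : ℕ} (hk : x ∈ dyadicIco n k) (hl : x ∈ dyadicIco n l) :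
    k = l :=
  (mem_dyadicIco_iff.1 hk).2.symm.trans (mem_dyadicIco_iff.1 hl).2

lemma volume_dyadicIco (n k : ℕ) : volume (dyadicIco n k) = (2 ^ n)⁻¹ := by
  rw [dyadicIco, Real.volume_Ico, ← sub_div, add_sub_cancel_left, one_div,
    ENNReal.ofReal_inv_of_pos (by positivity), ENNReal.ofReal_pow zero_le_two, ENNReal.ofReal_ofNat]

lemma volume_dyadicIco_le_iff {n m k l : ℕ} :
    volume (dyadicIco n k) ≤ volume (dyadicIco m l) ↔ m ≤ n := by
  rw [volume_dyadicIco, volume_dyadicIco, ENNReal.inv_le_inv]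
  exact_mod_cast Nat.pow_le_pow_iff_right (by norm_num : 1 < 2)

lemma volume_dyadicIco_div_two (n k : ℕ) :
    volume (dyadicIco n (k / 2)) = 2 * volume (dyadicIco (n + 1) k) := by
  rw [volume_dyadicIco, volume_dyadicIco, pow_succ, ENNReal.mul_inv (by simp) (by simp),
    mul_comm, mul_assoc, ENNReal.inv_mul_cancel two_ne_zero ENNReal.ofNat_ne_top, mul_one]

lemma left_mem_dyadicIco (n k : ℕ) : (k : ℝ) / 2 ^ n ∈ dyadicIco n k :=
  left_mem_Ico.2 (div_lt_div_of_pos_right (lt_add_one _) (by positivity))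

lemma dyadicIco_subset_of_mem {x : ℝ} {n m k l : ℕ} (h : m ≤ n) (hk : x ∈ dyadicIco n k)
    (hl : x ∈ dyadicIco m l) : dyadicIco n k ⊆ dyadicIco m l := by
  have hsub := dyadicIco_subset_ancestor k h
  rwa [dyadicIco_eq_of_mem (hsub hk) hl] at hsub

namespace IsDyadic

variable {I I' J : Set ℝ}

lemma measurableSet (hI : IsDyadic I) : MeasurableSet I := by
  obtain ⟨n, k, -, rfl⟩ := isDyadic_iff.1 hI
  exact measurableSet_Ico

lemma closure_ae_eq (hI : IsDyadic I) : closure I =ᵐ[volume] I := by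
  obtain ⟨n, k, -, rfl⟩ := isDyadic_iff.1 hI
  rw [dyadicIco, closure_Ico (left_mem_Ico.1 (left_mem_dyadicIco n k)).ne]
  exact Ico_ae_eq_Icc.symm

lemma subset_of_closure_subset (hI : IsDyadic I) (hJ : IsDyadic J)
    (h : closure I ⊆ closure J) : I ⊆ J := by
  obtain ⟨n, k, -, rfl⟩ := isDyadic_iff.1 hI
  obtain ⟨m, l, -, rfl⟩ := isDyadic_iff.1 hJ
  have hk := left_mem_Ico.1 (left_mem_dyadicIco n k)
  have hl := left_mem_Ico.1 (left_mem_dyadicIco m l)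
  rw [dyadicIco, dyadicIco, closure_Ico hk.ne, closure_Ico hl.ne, Icc_subset_Icc_iff hk.le] at h
  exact Ico_subset_Ico h.1 h.2

lemma subset_or_subset (hI : IsDyadic I) (hI' : IsDyadic I') (h : ¬Disjoint I I') :
    I ⊆ I' ∨ I' ⊆ I := by
  obtain ⟨n, k, -, rfl⟩ := isDyadic_iff.1 hI
  obtain ⟨m, l, -, rfl⟩ := isDyadic_iff.1 hI'
  obtain ⟨x, hxI, hxI'⟩ := not_disjoint_iff.1 h
  rcases le_total m n with hmn | hnm
  · exact .inl (dyadicIco_subset_of_mem hmn hxI hxI')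
  · exact .inr (dyadicIco_subset_of_mem hnm hxI' hxI)

lemma finite_supersets (hI : IsDyadic I) : {I' | IsDyadic I' ∧ I ⊆ I'}.Finite := by
  obtain ⟨n, k, -, rfl⟩ := isDyadic_iff.1 hI
  refine ((finite_le_nat n).image fun m ↦ dyadicIco m (k / 2 ^ (n - m))).subset ?_
  rintro _ ⟨⟨m, l, -, rfl⟩, hsub⟩
  have hmn : m ≤ n := volume_dyadicIco_le_iff.1 (measure_mono hsub)
  have hx := left_mem_dyadicIco n k
  exact ⟨m, hmn, show dyadicIco m _ = dyadicIco m l by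
    rw [dyadicIco_eq_of_mem (dyadicIco_subset_ancestor k hmn hx) (hsub hx)]⟩

lemma exists_parent_subset (hI : IsDyadic I) (hJ : IsDyadic J) (hIJ : I ⊆ J) (hne : I ≠ J) :
    ∃ P, DParent P I ∧ P ⊆ J := by
  obtain ⟨n, k, hk, rfl⟩ := isDyadic_iff.1 hI
  obtain ⟨m, l, -, rfl⟩ := isDyadic_iff.1 hJ
  have hx := left_mem_dyadicIco n k
  have hmn : m < n := by
    refine (volume_dyadicIco_le_iff.1 (measure_mono hIJ)).lt_of_ne ?_
    rintro rfl
    exact hne (by rw [dyadicIco_eq_of_mem hx (hIJ hx)])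
  obtain ⟨n, rfl⟩ := Nat.exists_eq_add_of_lt hmn
  have hsub : dyadicIco (m + n + 1) k ⊆ dyadicIco (m + n) (k / 2) := by
    simpa using dyadicIco_subset_ancestor k (Nat.le_succ (m + n))
  refine ⟨dyadicIco (m + n) (k / 2), ⟨⟨m + n, k / 2, ?_, rfl⟩, ⟨_, k, hk, rfl⟩, hsub,
    volume_dyadicIco_div_two _ _⟩, dyadicIco_subset_of_mem (by omega) (hsub hx) (hIJ hx)⟩
  rw [pow_succ] at hk
  omega

lemma pairwiseDisjoint_maximal {Q : Set ℝ → Prop} (hQ : ∀ I, Q I → IsDyadic I) :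
    {I | Maximal Q I}.PairwiseDisjoint id := by
  intro P hP P' hP' hne
  by_contra h
  rcases (hQ P hP.1).subset_or_subset (hQ P' hP'.1) h with hs | hs
  · exact hne (hP.eq_of_le hP'.1 hs)
  · exact hne (hP'.eq_of_le hP.1 hs).symm

end IsDyadic

lemma countable_setOf_isDyadic : {I : Set ℝ | IsDyadic I}.Countable :=
  (countable_range fun p : ℕ × ℕ ↦ dyadicIco p.1 p.2).mono fun _ hI ↦ by
    obtain ⟨n, k, -, rfl⟩ := isDyadic_iff.1 hI
    exact ⟨(n, k), rfl⟩

lemma exists_maximal_dyadic_superset {Q : Set ℝ → Prop} (hQ : ∀ I, Q I → IsDyadic I)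
    {I₀ : Set ℝ} (h₀ : Q I₀) : ∃ I, I₀ ⊆ I ∧ Maximal Q I := by
  have hfin : {I | Q I ∧ I₀ ⊆ I}.Finite :=
    (hQ I₀ h₀).finite_supersets.subset fun I hI ↦ ⟨hQ I hI.1, hI.2⟩
  obtain ⟨I, hI₀I, hmax⟩ := hfin.exists_le_maximal ⟨h₀, subset_rfl⟩
  exact ⟨I, hI₀I, hmax.1.1, fun I' hI' hII' ↦ hmax.2 ⟨hI', hI₀I.trans hII'⟩ hII'⟩

namespace DParent

variable {P P' I : Set ℝ}

lemma unique (h : DParent P I) (h' : DParent P' I) : P = P' := by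
  obtain ⟨hP, hI, hIP, hv⟩ := h
  obtain ⟨hP', -, hIP', hv'⟩ := h'
  obtain ⟨n, k, -, rfl⟩ := isDyadic_iff.1 hP
  obtain ⟨m, l, -, rfl⟩ := isDyadic_iff.1 hP'
  obtain ⟨i, j, -, rfl⟩ := isDyadic_iff.1 hI
  have hx := left_mem_dyadicIco i j
  obtain rfl : n = m := le_antisymm (volume_dyadicIco_le_iff.1 (by rw [hv, hv']))
    (volume_dyadicIco_le_iff.1 (by rw [hv, hv']))
  rw [dyadicIco_eq_of_mem (hIP hx) (hIP' hx)]

lemma ne (h : DParent P I) : P ≠ I := by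
  obtain ⟨-, hI, -, hv⟩ := h
  obtain ⟨n, k, -, rfl⟩ := isDyadic_iff.1 hI
  intro heq
  rw [heq, volume_dyadicIco] at hv
  have h0 : ((2 : ℝ≥0∞) ^ n)⁻¹ ≠ 0 := by simp
  have htop : ((2 : ℝ≥0∞) ^ n)⁻¹ ≠ ⊤ := by simp
  have h12 := (ENNReal.mul_left_inj h0 htop).1 ((one_mul _).trans hv)
  norm_num at h12

end DParent

theorem MeasureTheory.measure_le_mul_measure_biUnion_of_subset_biUnion {α ι : Type*}
    [MeasurableSpace α] {μ : Measure α} {s : Set ι} {P E : ι → Set α} {G : Set α} {c : ℝ≥0∞}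
    (hs : s.Countable) (hd : s.PairwiseDisjoint P) (hm : ∀ i ∈ s, MeasurableSet (P i))
    (hG : G ⊆ ⋃ i ∈ s, E i) (hc : ∀ i ∈ s, μ (G ∩ E i) ≤ c * μ (P i)) :
    μ G ≤ c * μ (⋃ i ∈ s, P i) :=
  calc μ G ≤ μ (⋃ i ∈ s, G ∩ E i) := by
        rw [← inter_iUnion₂]
        exact measure_mono (subset_inter subset_rfl hG)
    _ ≤ ∑' i : s, μ (G ∩ E i) := measure_biUnion_le μ hs _
    _ ≤ ∑' i : s, c * μ (P i) := ENNReal.tsum_le_tsum fun i ↦ hc i i.2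
    _ = c * μ (⋃ i ∈ s, P i) := by rw [ENNReal.tsum_mul_left, measure_biUnion hs hd hm]

def heavyFam (ε : ℝ) (J G : Set ℝ) : Set (Set ℝ) :=
  {I | IsDyadic I ∧ I ⊆ J ∧ ENNReal.ofReal (1 - ε) * volume I ≤ volume (I ∩ G)}

section Stopping

variable {ε : ℝ} {J G I P : Set ℝ}

lemma maxFam_eq : maxFam ε J G = {I | Maximal (· ∈ heavyFam ε J G) I} := by
  ext I
  simp only [maxFam, heavyFam, mem_ofPred_eq, maximal_iff, and_imp, and_assoc, eq_comm (a := I)]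

lemma starFam_eq : starFam ε J G = {P | Maximal (· ∈ parFam ε J G) P} := by
  ext P
  simp only [starFam, mem_ofPred_eq, maximal_iff, eq_comm (a := P)]

lemma notMem_heavyFam_self (hGsmall : volume G < ENNReal.ofReal (1 - ε) * volume J) :
    J ∉ heavyFam ε J G :=
  fun hJ ↦ (hJ.2.2.trans (measure_mono inter_subset_right)).not_gt hGsmall

variable (hJ : IsDyadic J) (hGsmall : volume G < ENNReal.ofReal (1 - ε) * volume J)
include hJ hGsmall

lemma isDyadic_and_subset_of_mem_parFam (hP : P ∈ parFam ε J G) : IsDyadic P ∧ P ⊆ J := by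
  obtain ⟨I, hI, hPI⟩ := hP
  rw [maxFam_eq] at hI
  have hIJ : I ≠ J := by
    rintro rfl
    exact notMem_heavyFam_self hGsmall hI.1
  obtain ⟨P', hP'I, hP'J⟩ := hI.1.1.exists_parent_subset hJ hI.1.2.1 hIJ
  rw [hPI.unique hP'I]
  exact ⟨hP'I.1, hP'J⟩

lemma volume_inter_lt_of_mem_parFam (hP : P ∈ parFam ε J G) :
    volume (P ∩ G) < ENNReal.ofReal (1 - ε) * volume P := by
  obtain ⟨hPdy, hPJ⟩ := isDyadic_and_subset_of_mem_parFam hJ hGsmall hP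
  obtain ⟨I, hI, hPI⟩ := hP
  rw [maxFam_eq] at hI
  by_contra! hheavy
  exact hPI.ne (hI.eq_of_le ⟨hPdy, hPJ, hheavy⟩ hPI.2.2.1).symm

lemma exists_mem_starFam_superset (hI : I ∈ heavyFam ε J G) : ∃ P ∈ starFam ε J G, I ⊆ P := by
  obtain ⟨I', hII', hI'⟩ := exists_maximal_dyadic_superset (fun _ h ↦ h.1) hI
  have hI'J : I' ≠ J := by
    rintro rfl
    exact notMem_heavyFam_self hGsmall hI'.1
  obtain ⟨P, hPI', hPJ⟩ := hI'.1.1.exists_parent_subset hJ hI'.1.2.1 hI'J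
  have hP : P ∈ parFam ε J G := ⟨I', by rw [maxFam_eq]; exact hI', hPI'⟩
  obtain ⟨P', hPP', hP'⟩ := exists_maximal_dyadic_superset
    (fun _ h ↦ (isDyadic_and_subset_of_mem_parFam hJ hGsmall h).1) hP
  exact ⟨P', by rw [starFam_eq]; exact hP', hII'.trans (hPI'.2.2.1.trans hPP')⟩

lemma Gstar_subset_closure : Gstar ε J G ⊆ closure J :=
  iUnion₂_subset fun _ hP ↦ closure_mono (isDyadic_and_subset_of_mem_parFam hJ hGsmall hP.1).2

lemma subset_Gstar (hε : 0 ≤ ε) (hGJ : G ⊆ closure J)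
    (hG : ∃ S : Set (Set ℝ), (∀ I ∈ S, IsDyadic I) ∧ G = ⋃ I ∈ S, closure I) :
    G ⊆ Gstar ε J G := by
  obtain ⟨S, hS, hGS⟩ := hG
  intro x hx
  obtain ⟨I, hIS, hxI⟩ := mem_iUnion₂.1 (hGS ▸ hx)
  have hIG : closure I ⊆ G := hGS ▸ subset_biUnion_of_mem (u := fun I ↦ closure I) hIS
  have hIJ : I ⊆ J := (hS I hIS).subset_of_closure_subset hJ (hIG.trans hGJ)
  have hheavy : I ∈ heavyFam ε J G := by
    refine ⟨hS I hIS, hIJ, ?_⟩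
    rw [inter_eq_self_of_subset_left (subset_closure.trans hIG)]
    exact mul_le_of_le_one_left' (ENNReal.ofReal_le_one.2 (by linarith))
  obtain ⟨P, hP, hIP⟩ := exists_mem_starFam_superset hJ hGsmall hheavy
  exact mem_biUnion hP (closure_mono hIP hxI)

lemma volume_le_mul_volume_Gstar (hGsub : G ⊆ Gstar ε J G) :
    volume G ≤ ENNReal.ofReal (1 - ε) * volume (Gstar ε J G) := by
  have hdy : ∀ P ∈ parFam ε J G, IsDyadic P :=
    fun _ hP ↦ (isDyadic_and_subset_of_mem_parFam hJ hGsmall hP).1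
  have hdisj : (starFam ε J G).PairwiseDisjoint id := by
    rw [starFam_eq]
    exact IsDyadic.pairwiseDisjoint_maximal hdy
  calc volume G ≤ ENNReal.ofReal (1 - ε) * volume (⋃ P ∈ starFam ε J G, P) := by
        refine measure_le_mul_measure_biUnion_of_subset_biUnion
          (countable_setOf_isDyadic.mono fun P hP ↦ hdy P hP.1) hdisj
          (fun P hP ↦ (hdy P hP.1).measurableSet) hGsub fun P hP ↦ ?_
        rw [inter_comm, measure_congr ((hdy P hP.1).closure_ae_eq.inter (ae_eq_refl G))]
        exact (volume_inter_lt_of_mem_parFam hJ hGsmall hP.1).le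
    _ ≤ ENNReal.ofReal (1 - ε) * volume (Gstar ε J G) := by
        gcongr
        exact iUnion₂_mono fun P _ ↦ subset_closure

end Stopping

theorem stmt10_general (J G : Set ℝ) (ε : ℝ) (hε : 0 < ε)
    (hJ : IsDyadic J) (hGJ : G ⊆ closure J)
    (hGfin : ∃ S : Set (Set ℝ), S.Finite ∧ (∀ I ∈ S, IsDyadic I) ∧ G = ⋃ I ∈ S, closure I)
    (hGsmall : volume G < ENNReal.ofReal (1 - ε) * volume J) :
    G ⊆ Gstar ε J G ∧ Gstar ε J G ⊆ closure J ∧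
      ENNReal.ofReal (1 + ε) * volume G ≤ volume (Gstar ε J G) := by
  obtain ⟨S, -, hS, hGS⟩ := hGfin
  have hGsub := subset_Gstar hJ hGsmall hε.le hGJ ⟨S, hS, hGS⟩
  refine ⟨hGsub, Gstar_subset_closure hJ hGsmall, ?_⟩
  calc ENNReal.ofReal (1 + ε) * volume G
      ≤ ENNReal.ofReal (1 + ε) * (ENNReal.ofReal (1 - ε) * volume (Gstar ε J G)) := by
        gcongr
        exact volume_le_mul_volume_Gstar hJ hGsmall hGsub
    _ = ENNReal.ofReal ((1 + ε) * (1 - ε)) * volume (Gstar ε J G) := by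
        rw [← mul_assoc, ENNReal.ofReal_mul (by linarith)]
    _ ≤ volume (Gstar ε J G) :=
        mul_le_of_le_one_left' (ENNReal.ofReal_le_one.2 (by nlinarith))

/-- If `J` is dyadic, `G ⊆ closure J` is a finite union of closed dyadic intervals with
`0 < |G| < (1-ε)|J|`, then `G ⊆ G* ⊆ closure J` and `|G*| ≥ (1+ε)|G|`. -/
theorem stmt10 (J G : Set ℝ) (ε : ℝ) (hε : 0 < ε) (hε' : ε < 1)
    (hJ : IsDyadic J) (hGJ : G ⊆ closure J)
    (hGfin : ∃ S : Set (Set ℝ), S.Finite ∧ (∀ I ∈ S, IsDyadic I) ∧ G = ⋃ I ∈ S, closure I)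
    (hGpos : 0 < volume G)
    (hGsmall : volume G < ENNReal.ofReal (1 - ε) * volume J) :
    G ⊆ Gstar ε J G ∧ Gstar ε J G ⊆ closure J ∧
      ENNReal.ofReal (1 + ε) * volume G ≤ volume (Gstar ε J G) :=
  stmt10_general J G ε hε hJ hGJ hGfin hGsmall
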